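/- Assume $Y$ is supported in $B(0,R)$, $X_1 = Y + \sigma\Xi$ with independent $\Xi \sim \mathcal N(0,I_d)$, $X_0 \sim \mathcal N(0,I_d)$ independent of $X_1$, and $u(t,x) = -\frac{x}{1-t} + \frac{1}{1-t}\mathbb E[X_1|X_t=x]$ where $X_t = tX_1 + (1-t)X_0$. Then for every $t \in (0,1)$ and $x \in \mathbb R^d$, $\|u(t,x)\|_2 \le B(1 + \|x\|_2)$ for a constant $B$ depending only on $\sigma$ and $R$ (uniform in $t$). -/

import Mathlib

/-!
Completing the square in `x₁`, the product of the Gaussian kernels of `X_t ∣ X₁` and `X₁ ∣ Y`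
factors as `N(x; t y, s) · N(x₁; m(y), w)` with `s = (1 - t)² + t² σ²` and
`m(y) = (t σ² / s) x + ((1 - t)² / s) y`. Integrating out `x₁` shows that `E[X₁ ∣ X_t = x]` is the
average of `m(y)` against the weight `pY(y) N(x; t y, s)`, that is `(t σ² / s) x + ((1 - t)² / s) z`
for some `z` with `‖z‖ ≤ R`. Hence `u(t, x) = ((σ² t - (1 - t)) / s) x + ((1 - t) / s) z`, and both
coefficients are at most `(σ² + 1) / s ≤ (σ² + 1)² / σ²` because
`(σ² + 1) s - σ² = (σ² t - (1 - t))²`.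
-/

open MeasureTheory

/-- Density of `N(0, v I_d)` on `ℝ^d`. -/
noncomputable def gaussD (d : ℕ) (v : ℝ) (x : EuclideanSpace ℝ (Fin d)) : ℝ :=
  (2 * Real.pi * v) ^ (-(d : ℝ) / 2) * Real.exp (-‖x‖ ^ 2 / (2 * v))

open Real

section GaussianDensity

variable {d : ℕ} {v : ℝ}

local notation "E" => EuclideanSpace ℝ (Fin d)

lemma gaussD_pos (hv : 0 < v) (x : E) : 0 < gaussD d v x := by
  unfold gaussD; positivity

@[fun_prop]
lemma continuous_gaussD : Continuous (gaussD d v) := by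
  unfold gaussD; fun_prop

lemma gaussD_le (hv : 0 < v) (x : E) : gaussD d v x ≤ (2 * π * v) ^ (-(d : ℝ) / 2) := by
  unfold gaussD
  refine mul_le_of_le_one_right (by positivity) (exp_le_one_iff.2 ?_)
  exact div_nonpos_of_nonpos_of_nonneg (by nlinarith [norm_nonneg x]) (by positivity)

lemma gaussD_neg (x : E) : gaussD d v (-x) = gaussD d v x := by
  simp only [gaussD, norm_neg]

lemma gaussD_eq_mul_exp (x : E) :
    gaussD d v x = (2 * π * v) ^ (-(d : ℝ) / 2) * rexp (-(2 * v)⁻¹ * ‖x‖ ^ 2) := by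
  rw [gaussD]; ring_nf

lemma integral_gaussD (hv : 0 < v) : ∫ x : E, gaussD d v x = 1 := by
  simp_rw [gaussD_eq_mul_exp, integral_const_mul]
  rw [GaussianFourier.integral_rexp_neg_mul_sq_norm (by positivity), finrank_euclideanSpace_fin,
    show π / (2 * v)⁻¹ = 2 * π * v by field_simp, ← rpow_add (by positivity), neg_div,
    neg_add_cancel, rpow_zero]

lemma integrable_exp_neg_mul_sq_norm {b : ℝ} (hb : 0 < b) :
    Integrable (fun x : E => rexp (-b * ‖x‖ ^ 2)) := by
  simpa [← Complex.ofReal_pow, ← Complex.ofReal_mul, ← Complex.ofReal_neg,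
    Complex.exp_ofReal_re] using (GaussianFourier.integrable_cexp_neg_mul_sq_norm_add
      (V := E) (b := (b : ℂ)) (by simpa using hb) 0 0).re

lemma integrable_gaussD (hv : 0 < v) : Integrable (gaussD d v) := by
  simp_rw [funext (gaussD_eq_mul_exp (d := d) (v := v))]
  exact (integrable_exp_neg_mul_sq_norm (by positivity)).const_mul _

lemma exp_neg_mul_sq_mul_le {b : ℝ} (hb : 0 < b) (r : ℝ) :
    rexp (-b * r ^ 2) * r ≤ (1 + 2 / b) * rexp (-(b / 2) * r ^ 2) := by
  have hr : r ≤ (1 + 2 / b) * rexp (b / 2 * r ^ 2) := by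
    calc r ≤ (1 + 2 / b) * (b / 2 * r ^ 2 + 1) := by
          field_simp; nlinarith [mul_nonneg hb.le (sq_nonneg (r - 1)), sq_nonneg (b * r)]
      _ ≤ (1 + 2 / b) * rexp (b / 2 * r ^ 2) := by gcongr; exact add_one_le_exp _
  calc rexp (-b * r ^ 2) * r ≤ rexp (-b * r ^ 2) * ((1 + 2 / b) * rexp (b / 2 * r ^ 2)) := by
        gcongr
    _ = (1 + 2 / b) * rexp (-(b / 2) * r ^ 2) := by
        rw [mul_left_comm, ← exp_add]; ring_nf

lemma integrable_gaussD_mul_norm (hv : 0 < v) : Integrable (fun x : E => gaussD d v x * ‖x‖) := by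
  have hb : 0 < (2 * v)⁻¹ := by positivity
  refine (((integrable_exp_neg_mul_sq_norm (half_pos hb)).const_mul (1 + 2 / (2 * v)⁻¹)).const_mul
    ((2 * π * v) ^ (-(d : ℝ) / 2))).mono' (by fun_prop) (ae_of_all _ fun x => ?_)
  rw [gaussD_eq_mul_exp, norm_of_nonneg (by positivity), mul_assoc]
  exact mul_le_mul_of_nonneg_left (exp_neg_mul_sq_mul_le hb ‖x‖) (by positivity)

lemma integrable_gaussD_smul (hv : 0 < v) : Integrable (fun x : E => gaussD d v x • x) := by
  refine (integrable_gaussD_mul_norm hv).mono' (by fun_prop) (ae_of_all _ fun x => ?_)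
  rw [norm_smul, norm_of_nonneg (gaussD_pos hv x).le]

lemma integral_gaussD_smul : ∫ x : E, gaussD d v x • x = 0 := by
  have h := integral_neg_eq_self (fun x : E => gaussD d v x • x) volume
  simp_rw [gaussD_neg, smul_neg, integral_neg] at h
  have h2 : (2 : ℝ) • ∫ x : E, gaussD d v x • x = 0 := by
    rw [two_smul]; nth_rewrite 1 [← h]; exact neg_add_cancel _
  exact (smul_eq_zero.1 h2).resolve_left two_ne_zero

lemma integral_gaussD_sub_smul (hv : 0 < v) (m : E) :
    ∫ x : E, gaussD d v (x - m) • x = m := by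
  rw [← integral_add_right_eq_self _ m]
  simp_rw [add_sub_cancel_right, smul_add]
  rw [integral_add (integrable_gaussD_smul hv) ((integrable_gaussD hv).smul_const m),
    integral_gaussD_smul, integral_smul_const, integral_gaussD hv, zero_add, one_smul]

lemma integrable_gaussD_sub_smul (hv : 0 < v) (m : E) :
    Integrable (fun x : E => gaussD d v (x - m) • x) := by
  refine (((integrable_gaussD_smul hv).add ((integrable_gaussD hv).smul_const m)).comp_sub_right
    m).congr (ae_of_all _ fun x => ?_)
  simp only [Pi.add_apply, ← smul_add, sub_add_cancel]

lemma integral_gaussD_sub_mul_norm_le (hv : 0 < v) (m : E) :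
    ∫ x : E, gaussD d v (x - m) * ‖x‖ ≤ (∫ x : E, gaussD d v x * ‖x‖) + ‖m‖ := by
  rw [← integral_add_right_eq_self _ m]
  simp_rw [add_sub_cancel_right]
  have hI := (integrable_gaussD_mul_norm (d := d) hv).add ((integrable_gaussD hv).mul_const ‖m‖)
  calc ∫ x : E, gaussD d v x * ‖x + m‖ ≤ ∫ x : E, gaussD d v x * ‖x‖ + gaussD d v x * ‖m‖ := by
        refine integral_mono_of_nonneg (ae_of_all _ fun x => by positivity [gaussD_pos hv x])
          hI (ae_of_all _ fun x => ?_)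
        simp only [← mul_add]
        exact mul_le_mul_of_nonneg_left (norm_add_le x m) (gaussD_pos hv x).le
    _ = (∫ x : E, gaussD d v x * ‖x‖) + ‖m‖ := by
        rw [integral_add (integrable_gaussD_mul_norm hv) ((integrable_gaussD hv).mul_const ‖m‖),
          integral_mul_const, integral_gaussD hv, one_mul]

lemma gaussD_mul_gaussD {v₁ v₂ : ℝ} (hv₁ : 0 < v₁) (hv₂ : 0 < v₂) (t : ℝ) (x x₁ y : E) :
    gaussD d v₁ (x - t • x₁) * gaussD d v₂ (x₁ - y) =
      gaussD d (v₁ + t ^ 2 * v₂) (x - t • y) *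
        gaussD d (v₁ * v₂ / (v₁ + t ^ 2 * v₂))
          (x₁ - ((t * v₂ / (v₁ + t ^ 2 * v₂)) • x + (v₁ / (v₁ + t ^ 2 * v₂)) • y)) := by
  have hs : 0 < v₁ + t ^ 2 * v₂ := by positivity
  have hpre : (2 * π * v₁) * (2 * π * v₂)
      = (2 * π * (v₁ + t ^ 2 * v₂)) * (2 * π * (v₁ * v₂ / (v₁ + t ^ 2 * v₂))) := by
    field_simp
  have hexp : -‖x - t • x₁‖ ^ 2 / (2 * v₁) + -‖x₁ - y‖ ^ 2 / (2 * v₂)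
      = -‖x - t • y‖ ^ 2 / (2 * (v₁ + t ^ 2 * v₂)) + -‖x₁ - ((t * v₂ / (v₁ + t ^ 2 * v₂)) • x
          + (v₁ / (v₁ + t ^ 2 * v₂)) • y)‖ ^ 2 / (2 * (v₁ * v₂ / (v₁ + t ^ 2 * v₂))) := by
    simp only [← real_inner_self_eq_norm_sq, inner_sub_left, inner_sub_right, inner_add_left,
      inner_add_right, real_inner_smul_left, real_inner_smul_right, real_inner_comm x]
    field_simp
    ring
  unfold gaussD
  calc _ = ((2 * π * v₁) * (2 * π * v₂)) ^ (-(d : ℝ) / 2)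
        * rexp (-‖x - t • x₁‖ ^ 2 / (2 * v₁) + -‖x₁ - y‖ ^ 2 / (2 * v₂)) := by
        rw [mul_rpow (x := 2 * π * v₁) (by positivity) (by positivity), exp_add]; ring
    _ = _ := by
        rw [hpre, hexp, mul_rpow (x := 2 * π * (v₁ + t ^ 2 * v₂)) (by positivity) (by positivity),
          exp_add]
        ring

end GaussianDensity

section GaussianMixture

variable {d : ℕ} {w : ℝ} {ι : Type*} [MeasurableSpace ι] {μ : Measure ι}
  {f : ι → ℝ} {m : ι → EuclideanSpace ℝ (Fin d)}

local notation "E" => EuclideanSpace ℝ (Fin d)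

lemma aestronglyMeasurable_gaussMixture (hf : AEStronglyMeasurable f μ) (hm : Measurable m) :
    AEStronglyMeasurable (fun p : E × ι => f p.2 * gaussD d w (p.1 - m p.2)) (volume.prod μ) :=
  hf.comp_snd.mul (continuous_gaussD.measurable.comp
    (measurable_fst.sub (hm.comp measurable_snd))).aestronglyMeasurable

variable [SFinite μ]

lemma integrable_gaussMixture (hw : 0 < w) (hf : Integrable f μ) (hm : Measurable m) :
    Integrable (fun p : E × ι => f p.2 * gaussD d w (p.1 - m p.2)) (volume.prod μ) := by
  refine (integrable_prod_iff' (aestronglyMeasurable_gaussMixture hf.1 hm)).2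
    ⟨ae_of_all _ fun y => ((integrable_gaussD hw).comp_sub_right (m y)).const_mul (f y), ?_⟩
  have h : ∀ y, ∫ x : E, ‖f y * gaussD d w (x - m y)‖ = ‖f y‖ := fun y => by
    simp_rw [norm_mul, norm_of_nonneg (gaussD_pos hw _).le]
    rw [integral_const_mul, integral_sub_right_eq_self, integral_gaussD hw, mul_one]
  simpa only [h] using hf.norm

lemma integral_integral_gaussMixture (hw : 0 < w) (hf : Integrable f μ) (hm : Measurable m) :
    ∫ x : E, ∫ y, f y * gaussD d w (x - m y) ∂μ = ∫ y, f y ∂μ := by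
  rw [integral_integral_swap (integrable_gaussMixture hw hf hm)]
  refine integral_congr_ae (ae_of_all _ fun y => ?_)
  dsimp only
  rw [integral_const_mul, integral_sub_right_eq_self, integral_gaussD hw, mul_one]

lemma integrable_gaussMixture_smul (hw : 0 < w) (hf : Integrable f μ)
    (hfm : Integrable (fun y => f y • m y) μ) (hm : Measurable m) :
    Integrable (fun p : E × ι => (f p.2 * gaussD d w (p.1 - m p.2)) • p.1) (volume.prod μ) := by
  have hmeas : AEStronglyMeasurable (fun p : E × ι => (f p.2 * gaussD d w (p.1 - m p.2)) • p.1)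
      (volume.prod μ) :=
    (aestronglyMeasurable_gaussMixture hf.1 hm).smul measurable_fst.aestronglyMeasurable
  refine (integrable_prod_iff' hmeas).2 ⟨ae_of_all _ fun y => ?_, ?_⟩
  · simp only [mul_smul]
    exact (integrable_gaussD_sub_smul hw (m y)).smul (f y)
  refine ((hf.norm.mul_const (∫ x : E, gaussD d w x * ‖x‖)).add hfm.norm).mono'
    hmeas.norm.prod_swap.integral_prod_right' (ae_of_all _ fun y => ?_)
  have h : ∫ x : E, ‖(f y * gaussD d w (x - m y)) • x‖
      = ‖f y‖ * ∫ x : E, gaussD d w (x - m y) * ‖x‖ := by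
    simp_rw [norm_smul, norm_mul, norm_of_nonneg (gaussD_pos hw _).le, mul_assoc]
    exact integral_const_mul _ _
  change ‖∫ x : E, ‖(f y * gaussD d w (x - m y)) • x‖‖
    ≤ ‖f y‖ * (∫ x : E, gaussD d w x * ‖x‖) + ‖f y • m y‖
  rw [h, norm_mul, norm_norm, norm_smul, norm_of_nonneg (integral_nonneg fun x => by positivity [gaussD_pos hw (x - m y)]),
    ← mul_add]
  exact mul_le_mul_of_nonneg_left (integral_gaussD_sub_mul_norm_le hw (m y)) (norm_nonneg _)

lemma integral_smul_integral_gaussMixture (hw : 0 < w) (hf : Integrable f μ)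
    (hfm : Integrable (fun y => f y • m y) μ) (hm : Measurable m) :
    ∫ x : E, (∫ y, f y * gaussD d w (x - m y) ∂μ) • x = ∫ y, f y • m y ∂μ := by
  simp_rw [← integral_smul_const]
  rw [integral_integral_swap (integrable_gaussMixture_smul hw hf hfm hm)]
  refine integral_congr_ae (ae_of_all _ fun y => ?_)
  simp_rw [mul_smul]
  rw [integral_smul, integral_gaussD_sub_smul hw]

end GaussianMixture

lemma integral_mul_pos_of_pos {α : Type*} [MeasurableSpace α] {μ : Measure α} {p g : α → ℝ} (hp0 : 0 ≤ p) (hp : 0 < ∫ a, p a ∂μ)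
    (hg : ∀ a, 0 < g a) (hpg : Integrable (fun a => p a * g a) μ) :
    0 < ∫ a, p a * g a ∂μ := by
  have hsupp : Function.support (fun a => p a * g a) = Function.support p := by
    ext a; simp [(hg a).ne']
  rw [integral_pos_iff_support_of_nonneg hp0 (Integrable.of_integral_ne_zero hp.ne')] at hp
  rwa [integral_pos_iff_support_of_nonneg (fun a => mul_nonneg (hp0 a) (hg a).le) hpg, hsupp]

section SmulSelf

variable {V : Type*} [NormedAddCommGroup V] [NormedSpace ℝ V] {f : V → ℝ} {R : ℝ}

lemma norm_smul_self_le (hR : ∀ y, f y ≠ 0 → ‖y‖ ≤ R) (y : V) : ‖f y • y‖ ≤ R * ‖f y‖ := by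
  rw [norm_smul, mul_comm]
  by_cases hy : f y = 0
  · simp [hy]
  · exact mul_le_mul_of_nonneg_right (hR y hy) (norm_nonneg _)

variable [MeasurableSpace V] {μ : Measure V}

lemma integrable_smul_self_of_norm_le [OpensMeasurableSpace V] [SecondCountableTopology V]
    (hf : Integrable f μ) (hR : ∀ y, f y ≠ 0 → ‖y‖ ≤ R) :
    Integrable (fun y => f y • y) μ :=
  (hf.norm.const_mul R).mono' (hf.1.smul aestronglyMeasurable_id)
    (ae_of_all _ (norm_smul_self_le hR))

lemma norm_integral_smul_self_le (hf0 : 0 ≤ f) (hf : Integrable f μ)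
    (hR : ∀ y, f y ≠ 0 → ‖y‖ ≤ R) : ‖∫ y, f y • y ∂μ‖ ≤ R * ∫ y, f y ∂μ := by
  rw [← integral_const_mul]
  refine norm_integral_le_of_norm_le (hf.const_mul R) (ae_of_all _ fun y => ?_)
  simpa only [norm_of_nonneg (hf0 y)] using norm_smul_self_le hR y

end SmulSelf

section NoisyObservation

variable {d : ℕ} {v₁ v₂ : ℝ} {pY : EuclideanSpace ℝ (Fin d) → ℝ}

local notation "E" => EuclideanSpace ℝ (Fin d)

lemma gaussD_mul_integral_gaussD_mul (hv₁ : 0 < v₁) (hv₂ : 0 < v₂) (t : ℝ) (x x₁ : E) :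
    gaussD d v₁ (x - t • x₁) * ∫ y, gaussD d v₂ (x₁ - y) * pY y =
      ∫ y, (pY y * gaussD d (v₁ + t ^ 2 * v₂) (x - t • y)) *
        gaussD d (v₁ * v₂ / (v₁ + t ^ 2 * v₂))
          (x₁ - ((t * v₂ / (v₁ + t ^ 2 * v₂)) • x + (v₁ / (v₁ + t ^ 2 * v₂)) • y)) := by
  rw [← integral_const_mul]
  refine integral_congr_ae (ae_of_all _ fun y => ?_)
  dsimp only
  rw [← mul_assoc, gaussD_mul_gaussD hv₁ hv₂]
  ring

lemma integrable_mul_gaussD (hpY : Integrable pY) (hv : 0 < v₁) (t : ℝ) (x : E) :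
    Integrable (fun y => pY y * gaussD d v₁ (x - t • y)) :=
  hpY.mul_bdd (by fun_prop) (ae_of_all _ fun y => by
    rw [norm_of_nonneg (gaussD_pos hv _).le]; exact gaussD_le hv _)

lemma integral_gaussD_mul_integral_gaussD (hv₁ : 0 < v₁) (hv₂ : 0 < v₂) (hpY : Integrable pY)
    (t : ℝ) (x : E) :
    ∫ x₁, gaussD d v₁ (x - t • x₁) * ∫ y, gaussD d v₂ (x₁ - y) * pY y =
      ∫ y, pY y * gaussD d (v₁ + t ^ 2 * v₂) (x - t • y) := by
  have hs : 0 < v₁ + t ^ 2 * v₂ := by positivity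
  simp_rw [gaussD_mul_integral_gaussD_mul hv₁ hv₂]
  exact integral_integral_gaussMixture (by positivity) (integrable_mul_gaussD hpY hs t x)
    (by fun_prop)

lemma integral_gaussD_mul_integral_gaussD_smul (hv₁ : 0 < v₁) (hv₂ : 0 < v₂)
    (hpY : Integrable pY) (hpYy : Integrable (fun y => pY y • y)) (t : ℝ) (x : E) :
    ∫ x₁, (gaussD d v₁ (x - t • x₁) * ∫ y, gaussD d v₂ (x₁ - y) * pY y) • x₁ =
      (t * v₂ / (v₁ + t ^ 2 * v₂) * ∫ y, pY y * gaussD d (v₁ + t ^ 2 * v₂) (x - t • y)) • x +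
        (v₁ / (v₁ + t ^ 2 * v₂)) •
          ∫ y, (pY y * gaussD d (v₁ + t ^ 2 * v₂) (x - t • y)) • y := by
  simp_rw [gaussD_mul_integral_gaussD_mul hv₁ hv₂]
  set s := v₁ + t ^ 2 * v₂
  have hs : 0 < s := by positivity
  have hf := integrable_mul_gaussD hpY hs t x
  have hfy : Integrable (fun y => (pY y * gaussD d s (x - t • y)) • y) := by
    refine (hpYy.bdd_smul (φ := fun y => gaussD d s (x - t • y)) ((2 * π * s) ^ (-(d : ℝ) / 2))
      (by fun_prop) (ae_of_all _ fun y => ?_)).congr (ae_of_all _ fun y => ?_)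
    · rw [norm_of_nonneg (gaussD_pos hs _).le]; exact gaussD_le hs _
    · simp only [Pi.smul_apply', smul_smul, mul_comm]
  have hx : Integrable (fun y => (pY y * gaussD d s (x - t • y)) • ((t * v₂ / s) • x)) :=
    hf.smul_const _
  have hy : Integrable (fun y => (v₁ / s) • (pY y * gaussD d s (x - t • y)) • y) :=
    hfy.smul (v₁ / s)
  have hsplit : ∀ y, (pY y * gaussD d s (x - t • y)) • ((t * v₂ / s) • x + (v₁ / s) • y)
      = (pY y * gaussD d s (x - t • y)) • ((t * v₂ / s) • x) +
        (v₁ / s) • (pY y * gaussD d s (x - t • y)) • y := fun y => by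
    rw [smul_add, smul_comm _ (v₁ / s)]
  rw [integral_smul_integral_gaussMixture (by positivity) hf
    ((hx.add hy).congr (ae_of_all _ fun y => (hsplit y).symm)) (by fun_prop)]
  simp_rw [hsplit]
  rw [integral_add hx hy, integral_smul_const, integral_smul, smul_smul, mul_comm]

end NoisyObservation

lemma norm_velocity_le {V : Type*} [NormedAddCommGroup V] [NormedSpace ℝ V] {c t R : ℝ}
    (hc : 0 < c) (ht : t ∈ Set.Ioo (0 : ℝ) 1) (x z : V) (hz : ‖z‖ ≤ R) :
    ‖-((1 - t)⁻¹ • x) + (1 - t)⁻¹ • ((t * c / ((1 - t) ^ 2 + t ^ 2 * c)) • x +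
        ((1 - t) ^ 2 / ((1 - t) ^ 2 + t ^ 2 * c)) • z)‖ ≤ (c + 1) ^ 2 / c * (‖x‖ + R) := by
  obtain ⟨ht0, ht1⟩ := ht
  set s := (1 - t) ^ 2 + t ^ 2 * c
  have hs : 0 < s := by positivity
  have h1t : 0 < 1 - t := by linarith
  have hsplit : -((1 - t)⁻¹ • x) + (1 - t)⁻¹ • ((t * c / s) • x + ((1 - t) ^ 2 / s) • z)
      = ((c * t - (1 - t)) / s) • x + ((1 - t) / s) • z := by
    rw [smul_add, smul_smul, smul_smul, ← neg_smul, ← add_assoc, ← add_smul]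
    congr 2 <;> field_simp
    ring
  have hK : (c + 1) / s ≤ (c + 1) ^ 2 / c := by
    rw [div_le_div_iff₀ hs hc]; nlinarith [sq_nonneg (c * t - (1 - t))]
  have ha : |c * t - (1 - t)| ≤ c + 1 := abs_le.2 ⟨by nlinarith, by nlinarith⟩
  rw [hsplit]
  calc _ ≤ |c * t - (1 - t)| / s * ‖x‖ + (1 - t) / s * ‖z‖ := by
        refine (norm_add_le _ _).trans_eq ?_
        simp only [norm_smul, norm_div, Real.norm_eq_abs, abs_of_pos hs, abs_of_pos h1t]
    _ ≤ (c + 1) / s * ‖x‖ + (c + 1) / s * R := by gcongr; linarith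
    _ ≤ (c + 1) ^ 2 / c * (‖x‖ + R) := by
        rw [← mul_add]; exact mul_le_mul_of_nonneg_right hK (by positivity [(norm_nonneg z).trans hz])

theorem stmt_15_general (d : ℕ) (σ R : ℝ) (hσ : 0 < σ) (hR : 0 < R)
    (pY : EuclideanSpace ℝ (Fin d) → ℝ)
    (hpY0 : ∀ y, 0 ≤ pY y) (hpY1 : ∫ y, pY y = 1)
    (hsupp : ∀ y, pY y ≠ 0 → ‖y‖ ≤ R)
    (pX1 : EuclideanSpace ℝ (Fin d) → ℝ)
    (hpX1 : pX1 = fun x1 => ∫ y, gaussD d (σ ^ 2) (x1 - y) * pY y)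
    (pt : ℝ → EuclideanSpace ℝ (Fin d) → ℝ)
    (hpt : pt = fun t x => ∫ x1, gaussD d ((1 - t) ^ 2) (x - t • x1) * pX1 x1)
    (condMean : ℝ → EuclideanSpace ℝ (Fin d) → EuclideanSpace ℝ (Fin d))
    (hcm : condMean = fun t x =>
      (pt t x)⁻¹ • ∫ x1, (gaussD d ((1 - t) ^ 2) (x - t • x1) * pX1 x1) • x1)
    (u : ℝ → EuclideanSpace ℝ (Fin d) → EuclideanSpace ℝ (Fin d))
    (hu : u = fun t x => -((1 - t)⁻¹ • x) + (1 - t)⁻¹ • condMean t x) :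
    ∃ B : ℝ, 0 < B ∧ ∀ t ∈ Set.Ioo (0 : ℝ) 1, ∀ x,
      ‖u t x‖ ≤ B * (1 + ‖x‖) := by
  have hσ2 : 0 < σ ^ 2 := by positivity
  have hpY : Integrable pY := integrable_of_integral_eq_one hpY1
  have hpYy : Integrable (fun y => pY y • y) := integrable_smul_self_of_norm_le hpY hsupp
  refine ⟨(σ ^ 2 + 1) ^ 2 / σ ^ 2 * (1 + R), by positivity, fun t ht x => ?_⟩
  have hv₁ : 0 < (1 - t) ^ 2 := pow_pos (sub_pos.2 ht.2) 2
  set s := (1 - t) ^ 2 + t ^ 2 * σ ^ 2 with hs_def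
  have hs : 0 < s := by positivity
  set P := ∫ y, pY y * gaussD d s (x - t • y) with hP_def
  set J := ∫ y, (pY y * gaussD d s (x - t • y)) • y with hJ_def
  have hP : 0 < P := integral_mul_pos_of_pos hpY0 (hpY1 ▸ one_pos) (fun y => gaussD_pos hs _)
    (integrable_mul_gaussD hpY hs t x)
  have hJ : ‖P⁻¹ • J‖ ≤ R := by
    rw [norm_smul, norm_inv, norm_of_nonneg hP.le, inv_mul_le_iff₀ hP, mul_comm]
    exact norm_integral_smul_self_le (fun y => mul_nonneg (hpY0 y) (gaussD_pos hs _).le)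
      (integrable_mul_gaussD hpY hs t x) fun y hy => hsupp y (left_ne_zero_of_mul hy)
  have hmean : condMean t x = (t * σ ^ 2 / s) • x + ((1 - t) ^ 2 / s) • (P⁻¹ • J) := by
    simp only [hcm, hpt, hpX1]
    rw [integral_gaussD_mul_integral_gaussD hv₁ hσ2 hpY,
      integral_gaussD_mul_integral_gaussD_smul hv₁ hσ2 hpY hpYy, ← hs_def, ← hP_def, ← hJ_def,
      smul_add, smul_smul, mul_left_comm, inv_mul_cancel₀ hP.ne', mul_one, smul_comm]
  calc ‖u t x‖ = ‖-((1 - t)⁻¹ • x) + (1 - t)⁻¹ • condMean t x‖ := by rw [hu]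
    _ ≤ (σ ^ 2 + 1) ^ 2 / σ ^ 2 * (‖x‖ + R) := by
        rw [hmean]; exact norm_velocity_le hσ2 ht x _ hJ
    _ ≤ (σ ^ 2 + 1) ^ 2 / σ ^ 2 * (1 + R) * (1 + ‖x‖) := by
        rw [mul_assoc]; gcongr; nlinarith [mul_nonneg hR.le (norm_nonneg x)]

/-- Linear growth of the velocity field: if `Y` is supported in `B(0,R)`, `X₁ = Y + σΞ`, and
`u(t,x) = -x/(1-t) + (1/(1-t))E[X₁|X_t=x]`, then `‖u(t,x)‖ ≤ B(1 + ‖x‖)` for a constant `B`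
depending only on `σ` and `R`, uniformly in `t ∈ (0,1)`. -/
theorem stmt_15 (d : ℕ) (σ R : ℝ) (hσ : 0 < σ) (hR : 0 < R)
    (pY : EuclideanSpace ℝ (Fin d) → ℝ) (hpYm : Measurable pY)
    (hpY0 : ∀ y, 0 ≤ pY y) (hpY1 : ∫ y, pY y = 1)
    (hsupp : ∀ y, pY y ≠ 0 → ‖y‖ ≤ R)
    (pX1 : EuclideanSpace ℝ (Fin d) → ℝ)
    (hpX1 : pX1 = fun x1 => ∫ y, gaussD d (σ ^ 2) (x1 - y) * pY y)
    (pt : ℝ → EuclideanSpace ℝ (Fin d) → ℝ)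
    (hpt : pt = fun t x => ∫ x1, gaussD d ((1 - t) ^ 2) (x - t • x1) * pX1 x1)
    (condMean : ℝ → EuclideanSpace ℝ (Fin d) → EuclideanSpace ℝ (Fin d))
    (hcm : condMean = fun t x =>
      (pt t x)⁻¹ • ∫ x1, (gaussD d ((1 - t) ^ 2) (x - t • x1) * pX1 x1) • x1)
    (u : ℝ → EuclideanSpace ℝ (Fin d) → EuclideanSpace ℝ (Fin d))
    (hu : u = fun t x => -((1 - t)⁻¹ • x) + (1 - t)⁻¹ • condMean t x) :
    ∃ B : ℝ, 0 < B ∧ ∀ t ∈ Set.Ioo (0 : ℝ) 1, ∀ x,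
      ‖u t x‖ ≤ B * (1 + ‖x‖) :=
  stmt_15_general d σ R hσ hR pY hpY0 hpY1 hsupp pX1 hpX1 pt hpt condMean hcm u hu
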